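/- arXiv:1912.13085 — 2 statements merged into one kernel-verified Lean document; each statement's English description precedes it below -/
import Mathlib

section
/- Let m be a positive natural number, let M and K be m×m real antisymmetric matrices, let S : ℝ^m → ℝ be continuously differentiable, and let z : ℝ × ℝ → ℝ^m (arguments written (x,t)) be twice continuously differentiable and satisfy M ∂_t z + K ∂_x z = ∇S(z) at every point. Define I(x,t) = (1/2)(M ∂_x z(x,t))·z(x,t) and G(x,t) = S(z(x,t)) − (1/2)(M ∂_t z(x,t))·z(x,t). Then ∂_t I + ∂_x G = 0 at every point (x,t). -/
/-!
By the product and chain rules, `∂ₜI + ∂ₓG` is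
`½ (M z_{xt}·z + M zₓ·zₜ) + ∇S(z)·zₓ − ½ (M z_{tx}·z + M zₜ·zₓ)`.
The mixed partials agree for a `C²` field, so the `z_{xt}` terms cancel. By the PDE,
`∇S(z)·zₓ = M zₜ·zₓ + K zₓ·zₓ`, and `K zₓ·zₓ = 0` since `K` is antisymmetric; what remains is
`½ (M zₓ·zₜ + M zₜ·zₓ)`, which vanishes since `M` is antisymmetric.
-/

open Matrix

/-- Partial derivative in the first (spatial) variable of a function on `ℝ × ℝ`. -/
noncomputable def pdX {E : Type*} [NormedAddCommGroup E] [NormedSpace ℝ E]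
    (z : ℝ × ℝ → E) (p : ℝ × ℝ) : E :=
  fderiv ℝ z p (1, 0)

/-- Partial derivative in the second (temporal) variable of a function on `ℝ × ℝ`. -/
noncomputable def pdT {E : Type*} [NormedAddCommGroup E] [NormedSpace ℝ E]
    (z : ℝ × ℝ → E) (p : ℝ × ℝ) : E :=
  fderiv ℝ z p (0, 1)

/-- The gradient of `S : ℝ^m → ℝ`, as the vector of partial derivatives. -/
noncomputable def gradS {m : ℕ} (S : (Fin m → ℝ) → ℝ) (v : Fin m → ℝ) : Fin m → ℝ :=
  fun i => fderiv ℝ S v (Pi.single i 1)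

namespace Matrix

variable {ι : Type*} [Fintype ι] {A : Matrix ι ι ℝ}

theorem mulVec_dotProduct_swap_of_transpose_eq_neg (hA : Aᵀ = -A) (a b : ι → ℝ) :
    A *ᵥ a ⬝ᵥ b = -(A *ᵥ b ⬝ᵥ a) := by
  rw [dotProduct_comm, dotProduct_mulVec, ← mulVec_transpose, hA, neg_mulVec, neg_dotProduct]

theorem mulVec_dotProduct_self_of_transpose_eq_neg (hA : Aᵀ = -A) (a : ι → ℝ) :
    A *ᵥ a ⬝ᵥ a = 0 := by
  linarith [mulVec_dotProduct_swap_of_transpose_eq_neg hA a a]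

end Matrix

section MatrixCalculus

variable {ι : Type*} [Fintype ι] {A : Matrix ι ι ℝ} {u w : ℝ → ι → ℝ} {u' w' : ι → ℝ} {t : ℝ}

theorem HasDerivAt.dotProduct (hu : HasDerivAt u u' t) (hw : HasDerivAt w w' t) :
    HasDerivAt (fun s => u s ⬝ᵥ w s) (u' ⬝ᵥ w t + u t ⬝ᵥ w') t :=
  (HasDerivAt.fun_sum (u := Finset.univ) (A := fun i s => u s i * w s i) fun i _ =>
    (hasDerivAt_pi.1 hu i).mul (hasDerivAt_pi.1 hw i)).congr_deriv Finset.sum_add_distrib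

theorem HasDerivAt.mulVec (hu : HasDerivAt u u' t) :
    HasDerivAt (fun s => A *ᵥ u s) (A *ᵥ u') t :=
  (LinearMap.toContinuousLinearMap (mulVecLin A)).hasFDerivAt.comp_hasDerivAt t hu

end MatrixCalculus

theorem fderiv_apply_eq_gradS_dotProduct {m : ℕ} (S : (Fin m → ℝ) → ℝ) (w v : Fin m → ℝ) :
    fderiv ℝ S w v = gradS S w ⬝ᵥ v := by
  conv_lhs => rw [pi_eq_sum_univ' v, map_sum]
  simp only [map_smul, smul_eq_mul, dotProduct, gradS, mul_comm]

section PartialDerivatives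

variable {E : Type*} [NormedAddCommGroup E] [NormedSpace ℝ E] {f : ℝ × ℝ → E}

theorem DifferentiableAt.hasDerivAt_pdX {x t : ℝ} (hf : DifferentiableAt ℝ f (x, t)) :
    HasDerivAt (fun y => f (y, t)) (pdX f (x, t)) x :=
  hf.hasFDerivAt.comp_hasDerivAt x ((hasDerivAt_id x).prodMk (hasDerivAt_const x t))

theorem DifferentiableAt.hasDerivAt_pdT {x t : ℝ} (hf : DifferentiableAt ℝ f (x, t)) :
    HasDerivAt (fun s => f (x, s)) (pdT f (x, t)) t :=
  hf.hasFDerivAt.comp_hasDerivAt t ((hasDerivAt_const t x).prodMk (hasDerivAt_id t))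

theorem ContDiff.differentiable_fderiv_apply (hf : ContDiff ℝ 2 f) (v : ℝ × ℝ) :
    Differentiable ℝ (fun q => fderiv ℝ f q v) :=
  ((hf.fderiv_right (m := 1) le_rfl).differentiable one_ne_zero).clm_apply
    (differentiable_const v)

theorem ContDiff.pdT_pdX (hf : ContDiff ℝ 2 f) (p : ℝ × ℝ) :
    pdT (pdX f) p = pdX (pdT f) p := by
  have hdf : DifferentiableAt ℝ (fderiv ℝ f) p :=
    (hf.fderiv_right (m := 1) le_rfl).differentiable one_ne_zero p
  have hmixed (v w : ℝ × ℝ) :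
      fderiv ℝ (fun q => fderiv ℝ f q v) p w = fderiv ℝ (fderiv ℝ f) p w v := by
    rw [fderiv_clm_apply hdf (differentiableAt_const v)]
    simp
  change fderiv ℝ (fun q => fderiv ℝ f q (1, 0)) p (0, 1) =
    fderiv ℝ (fun q => fderiv ℝ f q (0, 1)) p (1, 0)
  rw [hmixed, hmixed]
  exact hf.contDiffAt.isSymmSndFDerivAt (by simp) _ _

end PartialDerivatives

theorem stmt1_general {m : ℕ}
    (M K : Matrix (Fin m) (Fin m) ℝ)
    (hM : Mᵀ = -M) (hK : Kᵀ = -K)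
    (S : (Fin m → ℝ) → ℝ) (hS : ContDiff ℝ 1 S)
    (z : ℝ × ℝ → Fin m → ℝ) (hz : ContDiff ℝ 2 z)
    (hpde : ∀ p : ℝ × ℝ, M.mulVec (pdT z p) + K.mulVec (pdX z p) = gradS S (z p))
    (I G : ℝ × ℝ → ℝ)
    (hI : ∀ p : ℝ × ℝ, I p = (1/2) * (M.mulVec (pdX z p) ⬝ᵥ z p))
    (hG : ∀ p : ℝ × ℝ, G p = S (z p) - (1/2) * (M.mulVec (pdT z p) ⬝ᵥ z p)) :
    ∀ x t : ℝ, deriv (fun s => I (x, s)) t + deriv (fun y => G (y, t)) x = 0 := by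
  intro x t
  set p : ℝ × ℝ := (x, t)
  have hzd : Differentiable ℝ z := hz.differentiable two_ne_zero
  have hIt : HasDerivAt (fun s => I (x, s))
      ((1/2) * (M *ᵥ pdT (pdX z) p ⬝ᵥ z p + M *ᵥ pdX z p ⬝ᵥ pdT z p)) t := by
    simp only [hI]
    exact ((hz.differentiable_fderiv_apply _ p).hasDerivAt_pdT.mulVec.dotProduct
      (hzd p).hasDerivAt_pdT).const_mul _
  have hGx : HasDerivAt (fun y => G (y, t))
      (gradS S (z p) ⬝ᵥ pdX z p -
        (1/2) * (M *ᵥ pdX (pdT z) p ⬝ᵥ z p + M *ᵥ pdT z p ⬝ᵥ pdX z p)) x := by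
    simp only [hG, ← fderiv_apply_eq_gradS_dotProduct]
    exact ((hS.differentiable one_ne_zero (z p)).hasFDerivAt.comp_hasDerivAt x
      (hzd p).hasDerivAt_pdX).sub
      (((hz.differentiable_fderiv_apply _ p).hasDerivAt_pdX.mulVec.dotProduct
        (hzd p).hasDerivAt_pdX).const_mul _)
  rw [hIt.deriv, hGx.deriv, ← hpde, add_dotProduct, hz.pdT_pdX,
    mulVec_dotProduct_self_of_transpose_eq_neg hK,
    mulVec_dotProduct_swap_of_transpose_eq_neg hM (pdX z p)]
  ring

/-- Local momentum conservation law `∂ₜI + ∂ₓG = 0` for the multi-symplectic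
Hamiltonian PDE `M zₜ + K zₓ = ∇S(z)`. -/
theorem stmt1 {m : ℕ} (hm : 0 < m)
    (M K : Matrix (Fin m) (Fin m) ℝ)
    (hM : Mᵀ = -M) (hK : Kᵀ = -K)
    (S : (Fin m → ℝ) → ℝ) (hS : ContDiff ℝ 1 S)
    (z : ℝ × ℝ → Fin m → ℝ) (hz : ContDiff ℝ 2 z)
    (hpde : ∀ p : ℝ × ℝ, M.mulVec (pdT z p) + K.mulVec (pdX z p) = gradS S (z p))
    (I G : ℝ × ℝ → ℝ)
    (hI : ∀ p : ℝ × ℝ, I p = (1/2) * (M.mulVec (pdX z p) ⬝ᵥ z p))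
    (hG : ∀ p : ℝ × ℝ, G p = S (z p) - (1/2) * (M.mulVec (pdT z p) ⬝ᵥ z p)) :
    ∀ x t : ℝ, deriv (fun s => I (x, s)) t + deriv (fun y => G (y, t)) x = 0 :=
  stmt1_general M K hM hK S hS z hz hpde I G hI hG
end

section
/- Assume the DG mesh setup below with scalar (ℝ-valued) mesh functions φ_h, u_h, v_h, w_h, real parameters η, ε, α₁, α₂. Suppose that for every j ∈ {1,…,N}, every t ∈ ℝ, and every polynomial test function ψ : I_j → ℝ of degree at most k: (a) (1/2)∫_{I_j} (∂_t u_h) ψ dx − ∫_{I_j} w_h ψ' dx + ŵ_{j+1/2} ψ(x_{j+1/2}) − ŵ_{j−1/2} ψ(x_{j−1/2}) = 0; (b) −(1/2)∫_{I_j} (∂_t φ_h) ψ dx + ε( ∫_{I_j} v_h ψ' dx − v̂_{j+1/2} ψ(x_{j+1/2}) + v̂_{j−1/2} ψ(x_{j−1/2}) ) = ∫_{I_j} ( −w_h + (η/2) u_h² ) ψ dx; (c) ε( −∫_{I_j} u_h ψ' dx + û_{j+1/2} ψ(x_{j+1/2}) − û_{j−1/2} ψ(x_{j−1/2}) ) =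 ∫_{I_j} v_h ψ dx; (d) ∫_{I_j} φ_h ψ' dx − φ̂_{j+1/2} ψ(x_{j+1/2}) + φ̂_{j−1/2} ψ(x_{j−1/2}) = −∫_{I_j} u_h ψ dx; where at each interface ŵ = {w_h} + α₁[w_h], v̂ = {v_h} − α₂[v_h], û = {u_h} + α₂[u_h], φ̂ = {φ_h} − α₁[φ_h]. Then for any α₁ and α₂ the discrete energy 𝓔_h(t) = Σ_j ∫_{I_j} ( (η/6) u_h³ − (1/2) v_h² ) dx is constant in time. -/
open MeasureTheory

/-- `f : ℝ → ℝ` is (globally) a polynomial of degree at most `k`. -/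
def IsPolyDegLE (k : ℕ) (f : ℝ → ℝ) : Prop :=
  ∃ p : Polynomial ℝ, p.natDegree ≤ k ∧ ∀ x : ℝ, f x = Polynomial.eval x p

/-- Index of the left interface of cell `j` (periodic, with `N` cells): the interface
`x_{j−1/2}` is interface number `(j + N − 1) % N` where interface `i` sits at node `i+1`. -/
def lidx (N j : ℕ) : ℕ := (j + N - 1) % N

/-- Left trace `v⁻` of a scalar mesh function at interface `j` (at node `xs (j+1)`). -/
noncomputable def trLs (xs : ℕ → ℝ) (z : ℕ → ℝ → ℝ → ℝ) (j : ℕ) (t : ℝ) : ℝ :=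
  z j t (xs (j + 1))

/-- Right trace `v⁺` of a scalar mesh function at interface `j`, periodic with `N`
cells: the value of cell `(j+1) % N` at its left endpoint. -/
noncomputable def trRs (N : ℕ) (xs : ℕ → ℝ) (z : ℕ → ℝ → ℝ → ℝ) (j : ℕ) (t : ℝ) : ℝ :=
  z ((j + 1) % N) t (xs ((j + 1) % N))

/-- Jump `[v] = v⁺ − v⁻` at interface `j`. -/
noncomputable def jmps (N : ℕ) (xs : ℕ → ℝ) (z : ℕ → ℝ → ℝ → ℝ) (j : ℕ) (t : ℝ) : ℝ :=
  trRs N xs z j t - trLs xs z j t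

/-- Average `{v} = (v⁺ + v⁻)/2` at interface `j`. -/
noncomputable def avgs (N : ℕ) (xs : ℕ → ℝ) (z : ℕ → ℝ → ℝ → ℝ) (j : ℕ) (t : ℝ) : ℝ :=
  (trRs N xs z j t + trLs xs z j t) / 2

/-- A scalar mesh function: in each cell, smooth in `t` and, for each `t`, a polynomial
of degree at most `k` in `x`. -/
def IsMeshFunS (N k : ℕ) (z : ℕ → ℝ → ℝ → ℝ) : Prop :=
  (∀ j < N, ∀ t : ℝ, IsPolyDegLE k (fun x => z j t x)) ∧
  (∀ j < N, ∀ x : ℝ, ContDiff ℝ (⊤ : ℕ∞) (fun t => z j t x))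

open Polynomial in
lemma IsPolyDegLE.continuous {k : ℕ} {f : ℝ → ℝ} (h : IsPolyDegLE k f) : Continuous f := by
  obtain ⟨p, -, hp⟩ := h
  have : f = fun x => p.eval x := funext hp
  rw [this]; exact p.continuous

lemma IsPolyDegLE.differentiable {k : ℕ} {f : ℝ → ℝ} (h : IsPolyDegLE k f) :
    Differentiable ℝ f := by
  obtain ⟨p, -, hp⟩ := h
  have : f = fun x => p.eval x := funext hp
  rw [this]; exact p.differentiable

lemma IsPolyDegLE.continuous_deriv {k : ℕ} {f : ℝ → ℝ} (h : IsPolyDegLE k f) :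
    Continuous (deriv f) := by
  obtain ⟨p, -, hp⟩ := h
  have : f = fun x => p.eval x := funext hp
  rw [this]
  have : deriv (fun x => p.eval x) = fun x => p.derivative.eval x := funext fun x => p.deriv
  rw [this]; exact p.derivative.continuous


namespace KdVAux
open Polynomial intervalIntegral



/-- Representation of a (time-varying) polynomial of degree ≤ k with smooth coefficients. -/
def Rep (k : ℕ) (g : ℝ → ℝ → ℝ) : Prop :=
  ∃ (c : Fin (k+1) → ℝ → ℝ) (L : Fin (k+1) → Polynomial ℝ),
    (∀ i, ContDiff ℝ (⊤ : ℕ∞) (c i)) ∧ (∀ i, (L i).natDegree ≤ k) ∧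
    ∀ t x, g t x = ∑ i, c i t * (L i).eval x


lemma mesh_rep {N k : ℕ} {z : ℕ → ℝ → ℝ → ℝ} (hz : IsMeshFunS N k z) {j : ℕ} (hj : j < N) :
    Rep k (z j) := by
  classical
  set v : Fin (k+1) → ℝ := fun i => (i : ℕ) with hv
  have hinj : Set.InjOn v (Finset.univ : Finset (Fin (k+1))) := by
    intro i _ i' _ h
    have : ((i : ℕ) : ℝ) = ((i' : ℕ) : ℝ) := h
    exact Fin.ext (Nat.cast_injective this)
  refine ⟨fun i t => z j t (v i), fun i => Lagrange.basis Finset.univ v i, ?_, ?_, ?_⟩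
  · intro i; exact hz.2 j hj (v i)
  · intro i
    rw [Lagrange.natDegree_basis hinj (Finset.mem_univ i)]
    simp
  · intro t x
    obtain ⟨p, hdeg, hp⟩ := hz.1 j hj t
    have hcard : p.degree < (Finset.univ : Finset (Fin (k+1))).card := by
      rw [Finset.card_univ, Fintype.card_fin]
      have h1 : p.degree ≤ (k : WithBot ℕ) :=
        Polynomial.degree_le_natDegree.trans (by exact_mod_cast hdeg)
      have h2 : (k : WithBot ℕ) < ((k+1 : ℕ) : WithBot ℕ) := by exact_mod_cast Nat.lt_succ_self k
      exact lt_of_le_of_lt h1 h2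
    have hinterp := Lagrange.eq_interpolate hinj hcard
    have : z j t x = p.eval x := hp x
    rw [this]
    conv_lhs => rw [hinterp]
    rw [Lagrange.interpolate_apply, Polynomial.eval_finset_sum]
    refine Finset.sum_congr rfl fun i _ => ?_
    simp only []
    rw [Polynomial.eval_mul, Polynomial.eval_C]
    have := hp (v i)
    simp only [] at this
    rw [this]



/-- time derivative of a two-variable function -/
noncomputable def tds (g : ℝ → ℝ → ℝ) : ℝ → ℝ → ℝ := fun t x => deriv (fun s => g s x) t

/-- `g t x = ∑ i, c i t * P i x` with `c i` differentiable and `P i` continuous. -/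
def Sep (g : ℝ → ℝ → ℝ) : Prop :=
  ∃ (ι : Type) (_ : Fintype ι) (c P : ι → ℝ → ℝ),
    (∀ i, Differentiable ℝ (c i)) ∧ (∀ i, Continuous (P i)) ∧
    ∀ t x, g t x = ∑ i, c i t * P i x

lemma Sep.of_right {Q : ℝ → ℝ} (hQ : Continuous Q) : Sep (fun _ x => Q x) :=
  ⟨Unit, inferInstance, fun _ _ => 1, fun _ => Q, fun _ => differentiable_const 1,
    fun _ => hQ, fun t x => by simp⟩

lemma Sep.add {g h : ℝ → ℝ → ℝ} (hg : Sep g) (hh : Sep h) : Sep (fun t x => g t x + h t x) := by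
  obtain ⟨ι, _, c, P, hc, hP, hrep⟩ := hg
  obtain ⟨ι', _, c', P', hc', hP', hrep'⟩ := hh
  refine ⟨ι ⊕ ι', inferInstance, Sum.elim c c', Sum.elim P P', ?_, ?_, ?_⟩
  · rintro (i|i)
    · simpa using hc i
    · simpa using hc' i
  · rintro (i|i)
    · simpa using hP i
    · simpa using hP' i
  · intro t x
    rw [Fintype.sum_sum_type]
    simp [hrep t x, hrep' t x]

lemma Sep.neg {g : ℝ → ℝ → ℝ} (hg : Sep g) : Sep (fun t x => -(g t x)) := by
  obtain ⟨ι, _, c, P, hc, hP, hrep⟩ := hg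
  exact ⟨ι, inferInstance, fun i => -(c i), P, fun i => (hc i).neg, hP, fun t x => by
    simp [hrep t x, ← Finset.sum_neg_distrib]⟩

lemma Sep.sub {g h : ℝ → ℝ → ℝ} (hg : Sep g) (hh : Sep h) : Sep (fun t x => g t x - h t x) := by
  have := hg.add hh.neg
  simpa [sub_eq_add_neg] using this

lemma Sep.const_mul {g : ℝ → ℝ → ℝ} (hg : Sep g) (r : ℝ) : Sep (fun t x => r * g t x) := by
  obtain ⟨ι, _, c, P, hc, hP, hrep⟩ := hg
  exact ⟨ι, inferInstance, fun i => fun t => r * c i t, P, fun i => (hc i).const_mul r, hP,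
    fun t x => by simp [hrep t x, Finset.mul_sum, mul_assoc]⟩

lemma Sep.mul {g h : ℝ → ℝ → ℝ} (hg : Sep g) (hh : Sep h) : Sep (fun t x => g t x * h t x) := by
  obtain ⟨ι, _, c, P, hc, hP, hrep⟩ := hg
  obtain ⟨ι', _, c', P', hc', hP', hrep'⟩ := hh
  refine ⟨ι × ι', inferInstance, fun p t => c p.1 t * c' p.2 t, fun p x => P p.1 x * P' p.2 x,
    fun p => (hc p.1).mul (hc' p.2), fun p => (hP p.1).mul (hP' p.2), ?_⟩
  intro t x
  show g t x * h t x = _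
  rw [hrep t x, hrep' t x, Finset.sum_mul_sum, Fintype.sum_prod_type]
  refine Finset.sum_congr rfl fun i _ => Finset.sum_congr rfl fun i' _ => by ring

lemma Sep.differentiableAt {g : ℝ → ℝ → ℝ} (hg : Sep g) (t x : ℝ) :
    DifferentiableAt ℝ (fun s => g s x) t := by
  obtain ⟨ι, _, c, P, hc, hP, hrep⟩ := hg
  have : (fun s => g s x) = fun s => ∑ i, c i s * P i x := funext fun s => hrep s x
  rw [this]
  exact DifferentiableAt.fun_sum fun i _ => ((hc i) t).mul_const _

lemma Sep.tds_eq {g : ℝ → ℝ → ℝ} {ι : Type} [Fintype ι] {c P : ι → ℝ → ℝ}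
    (hc : ∀ i, Differentiable ℝ (c i)) (hrep : ∀ t x, g t x = ∑ i, c i t * P i x)
    (t x : ℝ) : tds g t x = ∑ i, deriv (c i) t * P i x := by
  have h : HasDerivAt (fun s => g s x) (∑ i, deriv (c i) t * P i x) t := by
    have : (fun s => g s x) = fun s => ∑ i, c i s * P i x := funext fun s => hrep s x
    rw [this]
    exact HasDerivAt.fun_sum fun i _ => ((hc i t).hasDerivAt.mul_const (P i x))
  exact h.deriv

lemma Sep.continuousX {g : ℝ → ℝ → ℝ} (hg : Sep g) (t : ℝ) : Continuous (fun x => g t x) := by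
  obtain ⟨ι, _, c, P, hc, hP, hrep⟩ := hg
  have : (fun x => g t x) = fun x => ∑ i, c i t * P i x := funext fun x => hrep t x
  rw [this]
  exact continuous_finset_sum _ fun i _ => (continuous_const.mul (hP i))

lemma Sep.continuousX_tds {g : ℝ → ℝ → ℝ} (hg : Sep g) (t : ℝ) :
    Continuous (fun x => tds g t x) := by
  obtain ⟨ι, _, c, P, hc, hP, hrep⟩ := hg
  have : (fun x => tds g t x) = fun x => ∑ i, deriv (c i) t * P i x :=
    funext fun x => Sep.tds_eq hc hrep t x
  rw [this]
  exact continuous_finset_sum _ fun i _ => (continuous_const.mul (hP i))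

lemma Sep.hasDerivAt_integral {g : ℝ → ℝ → ℝ} (hg : Sep g) (a b t : ℝ) :
    HasDerivAt (fun s => ∫ x in a..b, g s x) (∫ x in a..b, tds g t x) t := by
  obtain ⟨ι, _, c, P, hc, hP, hrep⟩ := hg
  have key : ∀ s : ℝ, (∫ x in a..b, g s x) = ∑ i, c i s * ∫ x in a..b, P i x := by
    intro s
    have h1 : (∫ x in a..b, g s x) = ∫ x in a..b, ∑ i, c i s * P i x :=
      intervalIntegral.integral_congr fun x _ => hrep s x
    rw [h1, intervalIntegral.integral_finset_sum]
    · exact Finset.sum_congr rfl fun i _ => intervalIntegral.integral_const_mul _ _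
    · exact fun i _ => (Continuous.intervalIntegrable (continuous_const.mul (hP i)) a b)
  have h2 : (∫ x in a..b, tds g t x) = ∑ i, deriv (c i) t * ∫ x in a..b, P i x := by
    have h1 : (∫ x in a..b, tds g t x) = ∫ x in a..b, ∑ i, deriv (c i) t * P i x :=
      intervalIntegral.integral_congr fun x _ => Sep.tds_eq hc hrep t x
    rw [h1, intervalIntegral.integral_finset_sum]
    · exact Finset.sum_congr rfl fun i _ => intervalIntegral.integral_const_mul _ _
    · exact fun i _ => (Continuous.intervalIntegrable (continuous_const.mul (hP i)) a b)
  have h3 : (fun s => ∫ x in a..b, g s x) = fun s => ∑ i, c i s * ∫ x in a..b, P i x :=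
    funext key
  rw [h3, h2]
  exact HasDerivAt.fun_sum fun i _ => ((hc i t).hasDerivAt.mul_const _)

lemma Sep.hasDerivAt_integral_mul {g : ℝ → ℝ → ℝ} (hg : Sep g) {Q : ℝ → ℝ}
    (hQ : Continuous Q) (a b t : ℝ) :
    HasDerivAt (fun s => ∫ x in a..b, g s x * Q x) (∫ x in a..b, tds g t x * Q x) t := by
  have h := (hg.mul (Sep.of_right hQ)).hasDerivAt_integral a b t
  have he : (∫ x in a..b, tds (fun t x => g t x * Q x) t x) = ∫ x in a..b, tds g t x * Q x := by
    refine intervalIntegral.integral_congr fun x _ => ?_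
    show deriv (fun s => g s x * Q x) t = _
    exact (((hg.differentiableAt t x).hasDerivAt).mul_const (Q x)).deriv
  rw [he] at h
  exact h



lemma Rep.sep {k : ℕ} {g : ℝ → ℝ → ℝ} (h : Rep k g) : Sep g := by
  obtain ⟨c, L, hc, hL, hrep⟩ := h
  exact ⟨Fin (k+1), inferInstance, c, fun i x => (L i).eval x,
    fun i => (hc i).differentiable (by simp), fun i => (L i).continuous, hrep⟩

lemma Rep.isPolyDegLE_tds {k : ℕ} {g : ℝ → ℝ → ℝ} (h : Rep k g) (t : ℝ) :
    IsPolyDegLE k (fun x => tds g t x) := by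
  obtain ⟨c, L, hc, hL, hrep⟩ := h
  refine ⟨∑ i, Polynomial.C (deriv (c i) t) * L i, ?_, ?_⟩
  · refine Polynomial.natDegree_sum_le_of_forall_le _ _ fun i _ => ?_
    exact (Polynomial.natDegree_C_mul_le _ _).trans (hL i)
  · intro x
    show tds g t x = _
    rw [Polynomial.eval_finset_sum]
    have := Sep.tds_eq (c := c) (P := fun i x => (L i).eval x)
      (fun i => (hc i).differentiable (by simp)) hrep t x
    rw [this]
    exact Finset.sum_congr rfl fun i _ => by rw [Polynomial.eval_mul, Polynomial.eval_C]

lemma ftc_pair {kq kr : ℕ} {q r : ℝ → ℝ} (hq : IsPolyDegLE kq q) (hr : IsPolyDegLE kr r)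
    (a b : ℝ) :
    (∫ x in a..b, q x * deriv r x) + (∫ x in a..b, r x * deriv q x) = q b * r b - q a * r a := by
  have hder : ∀ x ∈ Set.uIcc a b, HasDerivAt (fun y => q y * r y)
      (q x * deriv r x + r x * deriv q x) x := by
    intro x _
    have h1 : HasDerivAt q (deriv q x) x := (hq.differentiable x).hasDerivAt
    have h2 : HasDerivAt r (deriv r x) x := (hr.differentiable x).hasDerivAt
    have := h1.mul h2
    exact this.congr_deriv (by ring)
  have hint : IntervalIntegrable (fun x => q x * deriv r x + r x * deriv q x) volume a b := by
    apply Continuous.intervalIntegrable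
    exact (hq.continuous.mul hr.continuous_deriv).add (hr.continuous.mul hq.continuous_deriv)
  have := intervalIntegral.integral_eq_sub_of_hasDerivAt hder hint
  rw [← this, intervalIntegral.integral_add (f := fun x => q x * deriv r x) (g := fun x => r x * deriv q x)
    (Continuous.intervalIntegrable (hq.continuous.mul hr.continuous_deriv) a b)
    (Continuous.intervalIntegrable (hr.continuous.mul hq.continuous_deriv) a b)]

lemma energy_hasDerivAt {U V : ℝ → ℝ → ℝ} (hU : Sep U) (hV : Sep V) (eta a b t : ℝ) :
    HasDerivAt (fun s => ∫ x in a..b, ((eta/6) * (U s x)^3 - (1/2) * (V s x)^2))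
      (∫ x in a..b, ((eta/2) * (U t x)^2 * tds U t x - V t x * tds V t x)) t := by
  have hsep : Sep (fun s x => (eta/6) * (U s x)^3 - (1/2) * (V s x)^2) := by
    have h1 : Sep (fun s x => (eta/6) * ((U s x) * ((U s x) * (U s x)))) :=
      (hU.mul (hU.mul hU)).const_mul (eta/6)
    have h2 : Sep (fun s x => (1/2) * ((V s x) * (V s x))) := (hV.mul hV).const_mul (1/2)
    have h3 := h1.sub h2
    have he : (fun (s x : ℝ) => (eta/6) * (U s x)^3 - (1/2) * (V s x)^2)
        = fun (s x : ℝ) => (eta/6) * ((U s x) * ((U s x) * (U s x))) - (1/2) * ((V s x) * (V s x)) := by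
      funext s x; ring
    rw [he]
    exact h3
  have h := hsep.hasDerivAt_integral a b t
  have he : (∫ x in a..b, tds (fun s x => (eta/6) * (U s x)^3 - (1/2) * (V s x)^2) t x)
      = ∫ x in a..b, ((eta/2) * (U t x)^2 * tds U t x - V t x * tds V t x) := by
    refine intervalIntegral.integral_congr fun x _ => ?_
    show deriv (fun s => (eta/6) * (U s x)^3 - (1/2) * (V s x)^2) t = _
    have hu : HasDerivAt (fun s => U s x) (tds U t x) t := (hU.differentiableAt t x).hasDerivAt
    have hv : HasDerivAt (fun s => V s x) (tds V t x) t := (hV.differentiableAt t x).hasDerivAt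
    have h3 : HasDerivAt (fun s => (eta/6) * (U s x)^3 - (1/2) * (V s x)^2)
        ((eta/6) * ((3 : ℕ) * (U t x)^2 * tds U t x) - (1/2) * ((2 : ℕ) * (V t x)^1 * tds V t x)) t := by
      exact ((hu.pow 3).const_mul (eta/6)).sub ((hv.pow 2).const_mul (1/2))
    rw [h3.deriv]
    push_cast
    ring
  rw [he] at h
  exact h


end KdVAux
namespace KdVAux2
open KdVAux

noncomputable def tmesh (z : ℕ → ℝ → ℝ → ℝ) : ℕ → ℝ → ℝ → ℝ := fun j => tds (z j)

lemma lidx_lt {N : ℕ} (hN : 0 < N) (j : ℕ) : lidx N j < N := Nat.mod_lt _ hN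

lemma lidx_succ {N : ℕ} (hN : 0 < N) {j : ℕ} (hj : j < N) : (lidx N j + 1) % N = j := by
  unfold lidx
  rw [Nat.mod_add_mod, Nat.sub_add_cancel (by omega), Nat.add_mod_right, Nat.mod_eq_of_lt hj]

lemma trRs_lidx {N : ℕ} (hN : 0 < N) {j : ℕ} (hj : j < N) (xs : ℕ → ℝ)
    (z : ℕ → ℝ → ℝ → ℝ) (t : ℝ) : trRs N xs z (lidx N j) t = z j t (xs j) := by
  unfold trRs
  rw [lidx_succ hN hj]

lemma sum_lidx {N : ℕ} (hN : 0 < N) (H : ℕ → ℝ) :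
    ∑ j ∈ Finset.range N, H (lidx N j) = ∑ j ∈ Finset.range N, H j := by
  refine Finset.sum_nbij' (i := fun j => lidx N j) (j := fun j => (j + 1) % N) ?_ ?_ ?_ ?_ ?_
  · intro a ha; exact Finset.mem_range.mpr (lidx_lt hN a)
  · intro a ha; exact Finset.mem_range.mpr (Nat.mod_lt _ hN)
  · intro a ha; exact lidx_succ hN (Finset.mem_range.mp ha)
  · intro a ha
    have ha' := Finset.mem_range.mp ha
    show ((a + 1) % N + N - 1) % N = a
    rcases Nat.lt_or_ge (a + 1) N with h | h
    · rw [Nat.mod_eq_of_lt h, show a + 1 + N - 1 = a + N by omega, Nat.add_mod_right,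
        Nat.mod_eq_of_lt ha']
    · have hA : a + 1 = N := by omega
      rw [hA, Nat.mod_self, Nat.zero_add, Nat.mod_eq_of_lt (by omega)]
      omega
  · intro a ha; rfl

/-- time derivative of the left trace -/
lemma trLs_hasDerivAt {N k : ℕ} {z : ℕ → ℝ → ℝ → ℝ} (hz : IsMeshFunS N k z)
    (xs : ℕ → ℝ) {j : ℕ} (hj : j < N) (t : ℝ) :
    HasDerivAt (fun s => trLs xs z j s) (trLs xs (tmesh z) j t) t := by
  have := ((hz.2 j hj (xs (j+1))).differentiable (by simp) t).hasDerivAt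
  exact this

lemma trRs_hasDerivAt {N k : ℕ} {z : ℕ → ℝ → ℝ → ℝ} (hz : IsMeshFunS N k z) (hN : 0 < N)
    (xs : ℕ → ℝ) (j : ℕ) (t : ℝ) :
    HasDerivAt (fun s => trRs N xs z j s) (trRs N xs (tmesh z) j t) t := by
  have := ((hz.2 ((j+1) % N) (Nat.mod_lt _ hN) (xs ((j+1) % N))).differentiable (by simp) t).hasDerivAt
  exact this

lemma avgs_hasDerivAt {N k : ℕ} {z : ℕ → ℝ → ℝ → ℝ} (hz : IsMeshFunS N k z) (hN : 0 < N)
    (xs : ℕ → ℝ) {j : ℕ} (hj : j < N) (t : ℝ) :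
    HasDerivAt (fun s => avgs N xs z j s) (avgs N xs (tmesh z) j t) t := by
  have h := ((trRs_hasDerivAt hz hN xs j t).add (trLs_hasDerivAt hz xs hj t)).div_const 2
  exact h

lemma jmps_hasDerivAt {N k : ℕ} {z : ℕ → ℝ → ℝ → ℝ} (hz : IsMeshFunS N k z) (hN : 0 < N)
    (xs : ℕ → ℝ) {j : ℕ} (hj : j < N) (t : ℝ) :
    HasDerivAt (fun s => jmps N xs z j s) (jmps N xs (tmesh z) j t) t :=
  (trRs_hasDerivAt hz hN xs j t).sub (trLs_hasDerivAt hz xs hj t)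

lemma fluxP_hasDerivAt {N k : ℕ} {z : ℕ → ℝ → ℝ → ℝ} (hz : IsMeshFunS N k z) (hN : 0 < N)
    (xs : ℕ → ℝ) {j : ℕ} (hj : j < N) (α t : ℝ) :
    HasDerivAt (fun s => avgs N xs z j s + α * jmps N xs z j s)
      (avgs N xs (tmesh z) j t + α * jmps N xs (tmesh z) j t) t :=
  (avgs_hasDerivAt hz hN xs hj t).add ((jmps_hasDerivAt hz hN xs hj t).const_mul α)

lemma fluxM_hasDerivAt {N k : ℕ} {z : ℕ → ℝ → ℝ → ℝ} (hz : IsMeshFunS N k z) (hN : 0 < N)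
    (xs : ℕ → ℝ) {j : ℕ} (hj : j < N) (α t : ℝ) :
    HasDerivAt (fun s => avgs N xs z j s - α * jmps N xs z j s)
      (avgs N xs (tmesh z) j t - α * jmps N xs (tmesh z) j t) t :=
  (avgs_hasDerivAt hz hN xs hj t).sub ((jmps_hasDerivAt hz hN xs hj t).const_mul α)

/-- left-interface part of the per-cell boundary contribution -/
noncomputable def Gfun (N : ℕ) (xs : ℕ → ℝ) (eps a1 a2 : ℝ) (f u v w : ℕ → ℝ → ℝ → ℝ)
    (t : ℝ) (i : ℕ) : ℝ :=
  (avgs N xs w i t + a1 * jmps N xs w i t) * trLs xs (tmesh f) i t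
  + (avgs N xs (tmesh f) i t - a1 * jmps N xs (tmesh f) i t) * trLs xs w i t
  - trLs xs w i t * trLs xs (tmesh f) i t
  - eps * ((avgs N xs v i t - a2 * jmps N xs v i t) * trLs xs (tmesh u) i t)
  - eps * ((avgs N xs (tmesh u) i t + a2 * jmps N xs (tmesh u) i t) * trLs xs v i t)
  + eps * (trLs xs v i t * trLs xs (tmesh u) i t)

noncomputable def Hfun (N : ℕ) (xs : ℕ → ℝ) (eps a1 a2 : ℝ) (f u v w : ℕ → ℝ → ℝ → ℝ)
    (t : ℝ) (i : ℕ) : ℝ :=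
  -((avgs N xs w i t + a1 * jmps N xs w i t) * trRs N xs (tmesh f) i t)
  - (avgs N xs (tmesh f) i t - a1 * jmps N xs (tmesh f) i t) * trRs N xs w i t
  + trRs N xs w i t * trRs N xs (tmesh f) i t
  + eps * ((avgs N xs v i t - a2 * jmps N xs v i t) * trRs N xs (tmesh u) i t)
  + eps * ((avgs N xs (tmesh u) i t + a2 * jmps N xs (tmesh u) i t) * trRs N xs v i t)
  - eps * (trRs N xs v i t * trRs N xs (tmesh u) i t)

lemma GH_cancel (N : ℕ) (xs : ℕ → ℝ) (eps a1 a2 : ℝ) (f u v w : ℕ → ℝ → ℝ → ℝ)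
    (t : ℝ) (i : ℕ) :
    Gfun N xs eps a1 a2 f u v w t i + Hfun N xs eps a1 a2 f u v w t i = 0 := by
  simp only [Gfun, Hfun, avgs, jmps]
  ring

end KdVAux2

/-- Energy conservation of the semi-discrete DG scheme for the nonlinear KdV equation
`u_t + η u u_x + ε² u_xxx = 0`, with numerical fluxes `ŵ = {w} + α₁[w]`,
`v̂ = {v} − α₂[v]`, `û = {u} + α₂[u]`, `φ̂ = {φ} − α₁[φ]`. -/
theorem stmt12 {N k : ℕ} (hN : 0 < N)
    (xs : ℕ → ℝ) (hxs : ∀ i < N, xs i < xs (i+1))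
    (eta eps a1 a2 : ℝ)
    (f u v w : ℕ → ℝ → ℝ → ℝ)
    (hf : IsMeshFunS N k f) (hu : IsMeshFunS N k u)
    (hv : IsMeshFunS N k v) (hw : IsMeshFunS N k w)
    (ha : ∀ j < N, ∀ t : ℝ, ∀ ψ : ℝ → ℝ, IsPolyDegLE k ψ →
      (1/2) * (∫ x in (xs j)..(xs (j+1)), deriv (fun s => u j s x) t * ψ x)
        - (∫ x in (xs j)..(xs (j+1)), w j t x * deriv ψ x)
        + (avgs N xs w j t + a1 * jmps N xs w j t) * ψ (xs (j+1))
        - (avgs N xs w (lidx N j) t + a1 * jmps N xs w (lidx N j) t) * ψ (xs j)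
      = 0)
    (hbb : ∀ j < N, ∀ t : ℝ, ∀ ψ : ℝ → ℝ, IsPolyDegLE k ψ →
      -(1/2) * (∫ x in (xs j)..(xs (j+1)), deriv (fun s => f j s x) t * ψ x)
        + eps * ((∫ x in (xs j)..(xs (j+1)), v j t x * deriv ψ x)
            - (avgs N xs v j t - a2 * jmps N xs v j t) * ψ (xs (j+1))
            + (avgs N xs v (lidx N j) t - a2 * jmps N xs v (lidx N j) t) * ψ (xs j))
      = ∫ x in (xs j)..(xs (j+1)), (-w j t x + (eta/2) * (u j t x)^2) * ψ x)
    (hcc : ∀ j < N, ∀ t : ℝ, ∀ ψ : ℝ → ℝ, IsPolyDegLE k ψ →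
      eps * (-(∫ x in (xs j)..(xs (j+1)), u j t x * deriv ψ x)
            + (avgs N xs u j t + a2 * jmps N xs u j t) * ψ (xs (j+1))
            - (avgs N xs u (lidx N j) t + a2 * jmps N xs u (lidx N j) t) * ψ (xs j))
      = ∫ x in (xs j)..(xs (j+1)), v j t x * ψ x)
    (hdd : ∀ j < N, ∀ t : ℝ, ∀ ψ : ℝ → ℝ, IsPolyDegLE k ψ →
      (∫ x in (xs j)..(xs (j+1)), f j t x * deriv ψ x)
        - (avgs N xs f j t - a1 * jmps N xs f j t) * ψ (xs (j+1))
        + (avgs N xs f (lidx N j) t - a1 * jmps N xs f (lidx N j) t) * ψ (xs j)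
      = -(∫ x in (xs j)..(xs (j+1)), u j t x * ψ x)) :
    ∀ t : ℝ,
      deriv (fun s =>
        ∑ j ∈ Finset.range N, ∫ x in (xs j)..(xs (j+1)),
          ((eta/6) * (u j s x)^3 - (1/2) * (v j s x)^2)) t = 0 := by
  intro t
  classical
  have Ru : ∀ j, j < N → KdVAux.Rep k (u j) := fun j hj => KdVAux.mesh_rep hu hj
  have Rv : ∀ j, j < N → KdVAux.Rep k (v j) := fun j hj => KdVAux.mesh_rep hv hj
  have Rf : ∀ j, j < N → KdVAux.Rep k (f j) := fun j hj => KdVAux.mesh_rep hf hj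
  have hDer : ∀ j ∈ Finset.range N, HasDerivAt
      (fun s => ∫ x in (xs j)..(xs (j+1)), ((eta/6) * (u j s x)^3 - (1/2) * (v j s x)^2))
      (∫ x in (xs j)..(xs (j+1)),
        ((eta/2) * (u j t x)^2 * KdVAux.tds (u j) t x - v j t x * KdVAux.tds (v j) t x)) t := by
    intro j hj
    have hj' := Finset.mem_range.mp hj
    exact KdVAux.energy_hasDerivAt (Ru j hj').sep (Rv j hj').sep eta _ _ t
  have hsum := HasDerivAt.fun_sum hDer
  rw [hsum.deriv]
  have key : ∀ j ∈ Finset.range N,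
      (∫ x in (xs j)..(xs (j+1)),
        ((eta/2) * (u j t x)^2 * KdVAux.tds (u j) t x - v j t x * KdVAux.tds (v j) t x))
      = KdVAux2.Gfun N xs eps a1 a2 f u v w t j
        + KdVAux2.Hfun N xs eps a1 a2 f u v w t (lidx N j) := by
    intro j hjm
    have hj : j < N := Finset.mem_range.mp hjm
    have hl : lidx N j < N := KdVAux2.lidx_lt hN j
    have cu : Continuous (fun x => u j t x) := (hu.1 j hj t).continuous
    have cv : Continuous (fun x => v j t x) := (hv.1 j hj t).continuous
    have cw : Continuous (fun x => w j t x) := (hw.1 j hj t).continuous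
    have hput : IsPolyDegLE k (fun x => KdVAux.tds (u j) t x) := (Ru j hj).isPolyDegLE_tds t
    have hpft : IsPolyDegLE k (fun x => KdVAux.tds (f j) t x) := (Rf j hj).isPolyDegLE_tds t
    have hpvt : IsPolyDegLE k (fun x => KdVAux.tds (v j) t x) := (Rv j hj).isPolyDegLE_tds t
    have cut : Continuous (fun x => KdVAux.tds (u j) t x) := hput.continuous
    have cvt : Continuous (fun x => KdVAux.tds (v j) t x) := hpvt.continuous
    have E1 := hbb j hj t (fun x => KdVAux.tds (u j) t x) hput
    have E2 := ha j hj t (fun x => KdVAux.tds (f j) t x) hpft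
    -- E3 : time derivative of (c) with test function v j t
    have heq3 : (fun s => eps * (-(∫ x in (xs j)..(xs (j+1)), u j s x * deriv (fun x => v j t x) x)
          + (avgs N xs u j s + a2 * jmps N xs u j s) * v j t (xs (j+1))
          - (avgs N xs u (lidx N j) s + a2 * jmps N xs u (lidx N j) s) * v j t (xs j)))
        = (fun s => ∫ x in (xs j)..(xs (j+1)), v j s x * v j t x) :=
      funext fun s => hcc j hj s (fun x => v j t x) (hv.1 j hj t)
    have hPhi3 : HasDerivAt (fun s => eps * (-(∫ x in (xs j)..(xs (j+1)), u j s x * deriv (fun x => v j t x) x)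
          + (avgs N xs u j s + a2 * jmps N xs u j s) * v j t (xs (j+1))
          - (avgs N xs u (lidx N j) s + a2 * jmps N xs u (lidx N j) s) * v j t (xs j)))
        (eps * (-(∫ x in (xs j)..(xs (j+1)), KdVAux.tds (u j) t x * deriv (fun x => v j t x) x)
          + (avgs N xs (KdVAux2.tmesh u) j t + a2 * jmps N xs (KdVAux2.tmesh u) j t) * v j t (xs (j+1))
          - (avgs N xs (KdVAux2.tmesh u) (lidx N j) t
              + a2 * jmps N xs (KdVAux2.tmesh u) (lidx N j) t) * v j t (xs j))) t := by
      refine HasDerivAt.const_mul eps (HasDerivAt.sub (HasDerivAt.add ?_ ?_) ?_)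
      · exact ((Ru j hj).sep.hasDerivAt_integral_mul ((hv.1 j hj t).continuous_deriv) _ _ t).neg
      · exact (KdVAux2.fluxP_hasDerivAt hu hN xs hj a2 t).mul_const _
      · exact (KdVAux2.fluxP_hasDerivAt hu hN xs hl a2 t).mul_const _
    have hPsi3 : HasDerivAt (fun s => ∫ x in (xs j)..(xs (j+1)), v j s x * v j t x)
        (∫ x in (xs j)..(xs (j+1)), KdVAux.tds (v j) t x * v j t x) t :=
      (Rv j hj).sep.hasDerivAt_integral_mul cv _ _ t
    rw [heq3] at hPhi3
    have E3 := hPhi3.unique hPsi3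
    -- E4 : time derivative of (d) with test function w j t
    have heq4 : (fun s => (∫ x in (xs j)..(xs (j+1)), f j s x * deriv (fun x => w j t x) x)
          - (avgs N xs f j s - a1 * jmps N xs f j s) * w j t (xs (j+1))
          + (avgs N xs f (lidx N j) s - a1 * jmps N xs f (lidx N j) s) * w j t (xs j))
        = (fun s => -(∫ x in (xs j)..(xs (j+1)), u j s x * w j t x)) :=
      funext fun s => hdd j hj s (fun x => w j t x) (hw.1 j hj t)
    have hPhi4 : HasDerivAt (fun s => (∫ x in (xs j)..(xs (j+1)), f j s x * deriv (fun x => w j t x) x)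
          - (avgs N xs f j s - a1 * jmps N xs f j s) * w j t (xs (j+1))
          + (avgs N xs f (lidx N j) s - a1 * jmps N xs f (lidx N j) s) * w j t (xs j))
        ((∫ x in (xs j)..(xs (j+1)), KdVAux.tds (f j) t x * deriv (fun x => w j t x) x)
          - (avgs N xs (KdVAux2.tmesh f) j t - a1 * jmps N xs (KdVAux2.tmesh f) j t) * w j t (xs (j+1))
          + (avgs N xs (KdVAux2.tmesh f) (lidx N j) t
              - a1 * jmps N xs (KdVAux2.tmesh f) (lidx N j) t) * w j t (xs j)) t := by
      refine HasDerivAt.add (HasDerivAt.sub ?_ ?_) ?_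
      · exact (Rf j hj).sep.hasDerivAt_integral_mul ((hw.1 j hj t).continuous_deriv) _ _ t
      · exact (KdVAux2.fluxM_hasDerivAt hf hN xs hj a1 t).mul_const _
      · exact (KdVAux2.fluxM_hasDerivAt hf hN xs hl a1 t).mul_const _
    have hPsi4 : HasDerivAt (fun s => -(∫ x in (xs j)..(xs (j+1)), u j s x * w j t x))
        (-(∫ x in (xs j)..(xs (j+1)), KdVAux.tds (u j) t x * w j t x)) t :=
      ((Ru j hj).sep.hasDerivAt_integral_mul cw _ _ t).neg
    rw [heq4] at hPhi4
    have E4 := hPhi4.unique hPsi4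
    -- integration by parts identities
    have F1 := KdVAux.ftc_pair (hv.1 j hj t) hput (xs j) (xs (j+1))
    have F2 := KdVAux.ftc_pair (hw.1 j hj t) hpft (xs j) (xs (j+1))
    have comm1 : (∫ x in (xs j)..(xs (j+1)), KdVAux.tds (f j) t x * KdVAux.tds (u j) t x)
        = ∫ x in (xs j)..(xs (j+1)), KdVAux.tds (u j) t x * KdVAux.tds (f j) t x :=
      intervalIntegral.integral_congr fun x _ => mul_comm _ _
    -- splitting the energy derivative integral
    have i1 : IntervalIntegrable (fun x => (-w j t x + (eta/2) * (u j t x)^2) * KdVAux.tds (u j) t x)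
        MeasureTheory.volume (xs j) (xs (j+1)) :=
      Continuous.intervalIntegrable ((cw.neg.add (continuous_const.mul (cu.pow 2))).mul cut) _ _
    have i2 : IntervalIntegrable (fun x => KdVAux.tds (u j) t x * w j t x)
        MeasureTheory.volume (xs j) (xs (j+1)) :=
      Continuous.intervalIntegrable (cut.mul cw) _ _
    have i3 : IntervalIntegrable (fun x => KdVAux.tds (v j) t x * v j t x)
        MeasureTheory.volume (xs j) (xs (j+1)) :=
      Continuous.intervalIntegrable (cvt.mul cv) _ _
    have split : (∫ x in (xs j)..(xs (j+1)),
          ((eta/2) * (u j t x)^2 * KdVAux.tds (u j) t x - v j t x * KdVAux.tds (v j) t x))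
        = (∫ x in (xs j)..(xs (j+1)), (-w j t x + (eta/2) * (u j t x)^2) * KdVAux.tds (u j) t x)
          + (∫ x in (xs j)..(xs (j+1)), KdVAux.tds (u j) t x * w j t x)
          - (∫ x in (xs j)..(xs (j+1)), KdVAux.tds (v j) t x * v j t x) := by
      rw [← intervalIntegral.integral_add i1 i2, ← intervalIntegral.integral_sub (i1.add i2) i3]
      exact intervalIntegral.integral_congr fun x _ => by ring
    rw [split]
    simp only [KdVAux2.Gfun, KdVAux2.Hfun, KdVAux2.tmesh, KdVAux.tds, trLs,
      KdVAux2.trRs_lidx hN hj] at E1 E2 E3 E4 F1 F2 comm1 ⊢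
    linear_combination (-1 : ℝ) * E1 - E2 + E3 + E4 - (1/2 : ℝ) * comm1 + eps * F1 - F2
  rw [Finset.sum_congr rfl key, Finset.sum_add_distrib,
    KdVAux2.sum_lidx hN (KdVAux2.Hfun N xs eps a1 a2 f u v w t), ← Finset.sum_add_distrib]
  simp [KdVAux2.GH_cancel]
end
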